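/- The product A × B = ωAB - ω̄BA - (i/√3)tr(AB)I on su(3), with ω = (1+i√3)/2, is orthogonal with respect to the inner product ⟨A,B⟩ = -tr(AB): for all A, B ∈ su(3), ⟨A×B, A×B⟩ = ⟨A,A⟩⟨B,B⟩ (after suitable normalization of the inner product). -/
import Mathlib


noncomputable section

open Matrix

/-- The `SU(3)`-invariant orthogonal multiplication on `su(3)`:
`A × B = ω A B - ω̄ B A - (i/√3) tr(AB) I`, where `ω = (1 + i√3)/2`. -/
def su3Cross (A B : Matrix (Fin 3) (Fin 3) ℂ) : Matrix (Fin 3) (Fin 3) ℂ :=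
  ((1 + Complex.I * (Real.sqrt 3 : ℂ)) / 2) • (A * B)
    - ((1 - Complex.I * (Real.sqrt 3 : ℂ)) / 2) • (B * A)
    - ((Complex.I / (Real.sqrt 3 : ℂ)) * (A * B).trace) • (1 : Matrix (Fin 3) (Fin 3) ℂ)

/-- The Ad-invariant real inner product `⟨A, B⟩ = -tr(AB)` on `su(3)`. -/
def su3Inner (A B : Matrix (Fin 3) (Fin 3) ℂ) : ℝ :=
  (-(A * B).trace).re

lemma su3_stepB (A B : Matrix (Fin 3) (Fin 3) ℂ) (hA : A.trace = 0) (hB : B.trace = 0) :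
    2 * (A*B*(A*B)).trace + 4 * (A*A*(B*B)).trace - 2 * ((A*B).trace)^2
      = (A*A).trace * (B*B).trace := by
  simp only [Matrix.trace, Matrix.diag, Matrix.mul_apply, Fin.sum_univ_three] at *
  have h22 : A 2 2 = -(A 0 0 + A 1 1) := by linear_combination hA
  have h22' : B 2 2 = -(B 0 0 + B 1 1) := by linear_combination hB
  rw [h22, h22']
  ring

lemma su3_trace_sq (P Q R : Matrix (Fin 3) (Fin 3) ℂ) (p q r : ℂ) :
    ((p•P + q•Q + r•R) * (p•P + q•Q + r•R)).trace =
      p*p*(P*P).trace + p*q*(P*Q).trace + p*r*(P*R).trace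
      + q*p*(Q*P).trace + q*q*(Q*Q).trace + q*r*(Q*R).trace
      + r*p*(R*P).trace + r*q*(R*Q).trace + r*r*(R*R).trace := by
  simp only [add_mul, mul_add, Matrix.smul_mul, Matrix.mul_smul, smul_smul,
    Matrix.trace_add, Matrix.trace_smul, smul_eq_mul]
  ring

lemma su3_key (A B : Matrix (Fin 3) (Fin 3) ℂ) (hA : A.trace = 0) (hB : B.trace = 0) :
    (su3Cross A B * su3Cross A B).trace = -(1/2) * ((A*A).trace * (B*B).trace) := by
  set u : ℂ := (Real.sqrt 3 : ℂ) with hu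
  have hu2 : u^2 = 3 := by
    rw [hu]
    norm_cast
    rw [Real.sq_sqrt (by norm_num : (0:ℝ) ≤ 3)]
  have hu0 : u ≠ 0 := by
    intro h
    rw [h] at hu2
    norm_num at hu2
  have hC : su3Cross A B = ((1 + Complex.I * u) / 2) • (A*B)
      + (-((1 - Complex.I * u) / 2)) • (B*A)
      + (-((Complex.I / u) * (A*B).trace)) • (1 : Matrix (Fin 3) (Fin 3) ℂ) := by
    simp [su3Cross, sub_eq_add_neg, neg_smul, hu]
  rw [hC, su3_trace_sq]
  -- trace rewrites
  have e1 : ((B*A)*(B*A)).trace = ((A*B)*(A*B)).trace := by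
    rw [show (B*A)*(B*A) = B*(A*(B*A)) by noncomm_ring, Matrix.trace_mul_comm]
    noncomm_ring
  have e2 : ((A*B)*(B*A)).trace = ((A*A)*(B*B)).trace := by
    rw [show (A*B)*(B*A) = (A*B*B)*A by noncomm_ring, Matrix.trace_mul_comm]
    noncomm_ring
  have e3 : ((B*A)*(A*B)).trace = ((A*A)*(B*B)).trace := by
    rw [show (B*A)*(A*B) = B*(A*(A*B)) by noncomm_ring, Matrix.trace_mul_comm]
    noncomm_ring
  have e4 : ((B*A)).trace = ((A*B)).trace := Matrix.trace_mul_comm B A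
  have e5 : ((A*B)*1).trace = (A*B).trace := by rw [mul_one]
  have e6 : ((1 : Matrix (Fin 3) (Fin 3) ℂ)*(A*B)).trace = (A*B).trace := by rw [one_mul]
  have e7 : ((B*A)*1).trace = (A*B).trace := by rw [mul_one]; exact e4
  have e8 : ((1 : Matrix (Fin 3) (Fin 3) ℂ)*(B*A)).trace = (A*B).trace := by rw [one_mul]; exact e4
  have e9 : ((1 : Matrix (Fin 3) (Fin 3) ℂ)*(1 : Matrix (Fin 3) (Fin 3) ℂ)).trace = 3 := by
    simp
  rw [e1, e2, e3, e5, e6, e7, e8, e9]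
  have hB2 := su3_stepB A B hA hB
  set x := ((A*B)*(A*B)).trace
  set y := ((A*A)*(B*B)).trace
  set t := (A*B).trace
  have hI : Complex.I^2 = -1 := Complex.I_sq
  have hdiv : Complex.I / u = Complex.I * u / 3 := by
    rw [div_eq_div_iff hu0 (by norm_num : (3:ℂ) ≠ 0)]
    linear_combination -Complex.I * hu2
  rw [hdiv]
  linear_combination (-(u^2)*t^2/3 + u^2*y/2 + u^2*x/2) * hI
    + (t^2/3 - y/2 - x/2) * hu2 + (-(1:ℂ)/2) * hB2

/-- The product `A × B = ωAB - ω̄BA - (i/√3) tr(AB) I` on `su(3)`, with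
`ω = (1+i√3)/2`, is orthogonal with respect to the inner product `⟨A, B⟩ = -tr(AB)`, after a
suitable normalization of the inner product: there is a constant `c > 0` such that
`⟨A×B, A×B⟩ = c ⟨A,A⟩ ⟨B,B⟩` for all `A, B ∈ su(3)` (so that for the rescaled inner product
`c • ⟨·,·⟩` one has `⟨A×B, A×B⟩ = ⟨A,A⟩ ⟨B,B⟩`). -/
theorem su3Cross_orthogonal_multiplication :
    ∃ c : ℝ, 0 < c ∧
      ∀ A B : Matrix (Fin 3) (Fin 3) ℂ,
        Aᴴ = -A → A.trace = 0 → Bᴴ = -B → B.trace = 0 →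
          su3Inner (su3Cross A B) (su3Cross A B) = c * su3Inner A A * su3Inner B B := by
  refine ⟨1/2, by norm_num, fun A B hAH hAt hBH hBt => ?_⟩
  have key := su3_key A B hAt hBt
  have hAre : ((A*A).trace).im = 0 := by
    have : star ((A*A).trace) = (A*A).trace := by
      rw [← Matrix.trace_conjTranspose, Matrix.conjTranspose_mul, hAH]
      simp [Matrix.trace_mul_comm]
    exact Complex.conj_eq_iff_im.mp this
  have hBre : ((B*B).trace).im = 0 := by
    have : star ((B*B).trace) = (B*B).trace := by
      rw [← Matrix.trace_conjTranspose, Matrix.conjTranspose_mul, hBH]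
      simp [Matrix.trace_mul_comm]
    exact Complex.conj_eq_iff_im.mp this
  unfold su3Inner
  rw [key]
  simp [Complex.mul_re, hAre, hBre]
  ring
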